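/- arXiv:1712.08042 — 9 statements merged into one kernel-verified Lean document; each statement's English description precedes it below -/
import Mathlib

section
/- Let n, k, j, l be integers with 1 ≤ k < j ≤ n and C(j-1,k) < l ≤ C(j,k). In the polynomial ring R = K[x_1,…,x_n] over a field K, the ideal generated by the monomials ∏_{t ∈ ⋃_{A∈F} A} x_t, where F ranges over all families of l pairwise distinct k-subsets of {1,…,n}, is equal to the ideal generated by all squarefree monomials of degree j, i.e. the monomials ∏_{t∈σ} x_t with σ a j-subset of {1,…,n}. (In the paper's notation: the l-fold lcm-ideal I_{k,n,l} of the k-out-of-n:F failure ideal equals I_{j,n}.) -/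
open MvPolynomial

/-! Both inclusions are counting arguments on the union `U = ⋃ F`. A family of `l` distinct
`k`-subsets of `U` needs `l ≤ C(|U|, k)`, so `l > C(j-1, k)` forces `|U| ≥ j`, and the
generator of `F` is a multiple of the generator of any `j`-subset of `U`. Conversely, a
`j`-set `σ` has `C(j, k) ≥ l` subsets of size `k`, and any `l` of them form a family whose
generator divides that of `σ`. -/

theorem Ideal.span_le_span_of_forall_exists_dvd {R : Type*} [CommSemiring R] {S T : Set R}
    (h : ∀ a ∈ S, ∃ b ∈ T, b ∣ a) : Ideal.span S ≤ Ideal.span T := by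
  refine Ideal.span_le.mpr fun a ha => ?_
  obtain ⟨b, hb, hba⟩ := h a ha
  exact Ideal.mem_of_dvd _ hba (Ideal.subset_span hb)

namespace Finset

variable {α : Type*} [DecidableEq α] {F : Finset (Finset α)} {k : ℕ}

theorem card_le_choose_card_sup_id (hF : ∀ A ∈ F, A.card = k) :
    F.card ≤ (F.sup id).card.choose k := by
  rw [← card_powersetCard]
  exact card_le_card fun A hA => mem_powersetCard.mpr ⟨le_sup (f := id) hA, hF A hA⟩

theorem le_card_sup_id_of_choose_lt {j : ℕ} (hF : ∀ A ∈ F, A.card = k)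
    (hlt : (j - 1).choose k < F.card) : j ≤ (F.sup id).card := by
  by_contra! hsmall
  have := (card_le_choose_card_sup_id hF).trans (Nat.choose_le_choose k (by omega : _ ≤ j - 1))
  omega

theorem exists_uniform_family_sup_id_subset {l : ℕ} (σ : Finset α)
    (hl : l ≤ σ.card.choose k) :
    ∃ F : Finset (Finset α), F.card = l ∧ (∀ A ∈ F, A.card = k) ∧ F.sup id ⊆ σ := by
  rw [← card_powersetCard] at hl
  obtain ⟨F, hFσ, hFl⟩ := exists_subset_card_eq hl
  exact ⟨F, hFl, fun A hA => (mem_powersetCard.mp (hFσ hA)).2,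
    Finset.sup_le fun A hA => (mem_powersetCard.mp (hFσ hA)).1⟩

end Finset

theorem kn_lcm_ideal_eq_jn_ideal_general {K : Type*} [Field K] (n k j l : ℕ)
    (hl1 : (j - 1).choose k < l) (hl2 : l ≤ j.choose k) :
    Ideal.span {m : MvPolynomial (Fin n) K | ∃ F : Finset (Finset (Fin n)),
        F.card = l ∧ (∀ A ∈ F, A.card = k) ∧ m = ∏ t ∈ F.sup id, X t} =
    Ideal.span {m : MvPolynomial (Fin n) K | ∃ σ : Finset (Fin n),
        σ.card = j ∧ m = ∏ t ∈ σ, X t} := by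
  apply le_antisymm <;> apply Ideal.span_le_span_of_forall_exists_dvd
  · rintro _ ⟨F, rfl, hF, rfl⟩
    obtain ⟨σ, hσU, hσ⟩ := Finset.exists_subset_card_eq (Finset.le_card_sup_id_of_choose_lt hF hl1)
    exact ⟨_, ⟨σ, hσ, rfl⟩, Finset.prod_dvd_prod_of_subset _ _ _ hσU⟩
  · rintro _ ⟨σ, rfl, rfl⟩
    obtain ⟨F, hFl, hF, hUσ⟩ := Finset.exists_uniform_family_sup_id_subset σ hl2
    exact ⟨_, ⟨F, hFl, hF, rfl⟩, Finset.prod_dvd_prod_of_subset _ _ _ hUσ⟩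

/-- **Theorem 1 (ideal form).** For `1 ≤ k < j ≤ n` and `C(j-1,k) < l ≤ C(j,k)`, the
`l`-fold lcm-ideal of the `k`-out-of-`n`:F failure ideal, generated by the monomials
`∏_{t ∈ ⋃ F} x_t` for families `F` of `l` pairwise distinct `k`-subsets of `{1,…,n}`,
equals the ideal generated by all squarefree monomials of degree `j`. -/
theorem kn_lcm_ideal_eq_jn_ideal {K : Type*} [Field K] (n k j l : ℕ)
    (hk : 1 ≤ k) (hkj : k < j) (hjn : j ≤ n)
    (hl1 : (j - 1).choose k < l) (hl2 : l ≤ j.choose k) :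
    Ideal.span {m : MvPolynomial (Fin n) K | ∃ F : Finset (Finset (Fin n)),
        F.card = l ∧ (∀ A ∈ F, A.card = k) ∧ m = ∏ t ∈ F.sup id, X t} =
    Ideal.span {m : MvPolynomial (Fin n) K | ∃ σ : Finset (Fin n),
        σ.card = j ∧ m = ∏ t ∈ σ, X t} :=
  kn_lcm_ideal_eq_jn_ideal_general n k j l hl1 hl2
end

section
/- Let k, j, l be integers with 1 ≤ k < j and C(j-1,k) < l ≤ C(j,k). Every finite set σ with |σ| = j is the union of a family of exactly l pairwise distinct k-element subsets of σ. -/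
/-- For `1 ≤ k < j` and `C(j-1,k) < l ≤ C(j,k)`, every finite set `σ` with `|σ| = j` is
the union of a family of exactly `l` pairwise distinct `k`-element subsets of `σ`. -/
theorem union_of_l_k_subsets {α : Type*} [DecidableEq α] (k j l : ℕ)
    (hk : 1 ≤ k) (hkj : k < j)
    (hl1 : (j - 1).choose k < l) (hl2 : l ≤ j.choose k)
    (σ : Finset α) (hσ : σ.card = j) :
    ∃ F : Finset (Finset α), F.card = l ∧
      (∀ A ∈ F, A ⊆ σ ∧ A.card = k) ∧ F.sup id = σ := by
  have hcard : l ≤ (σ.powersetCard k).card := by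
    rw [Finset.card_powersetCard, hσ]; exact hl2
  obtain ⟨F, hFsub, hFcard⟩ := Finset.exists_subset_card_eq hcard
  refine ⟨F, hFcard, ?_, ?_⟩
  · intro A hA
    have := hFsub hA
    rw [Finset.mem_powersetCard] at this
    exact this
  · apply Finset.Subset.antisymm
    · exact Finset.sup_le fun A hA => (Finset.mem_powersetCard.mp (hFsub hA)).1
    · intro x hx
      by_contra hxF
      have hmiss : F ⊆ (σ.erase x).powersetCard k := by
        intro A hA
        rw [Finset.mem_powersetCard]
        obtain ⟨hAs, hAc⟩ := Finset.mem_powersetCard.mp (hFsub hA)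
        refine ⟨fun y hy => Finset.mem_erase.mpr ⟨?_, hAs hy⟩, hAc⟩
        rintro rfl
        exact hxF (Finset.mem_sup.mpr ⟨A, hA, hy⟩)
      have : F.card ≤ ((σ.erase x).powersetCard k).card := Finset.card_le_card hmiss
      rw [hFcard, Finset.card_powersetCard, Finset.card_erase_of_mem hx, hσ] at this
      omega
end

section
/- Let k ≥ 1, n ≥ k, i ≥ 1 be integers and let σ ⊆ {1,…,n-k+1} with |σ| = i be gap-admissible for k. Then for every τ ⊆ {1,…,n-k+1} with |τ| = i and τ ≠ σ, supp_k(τ) is not a subset of supp_k(σ). In particular, the monomial corresponding to supp_k(σ) is a minimal generator of the i-fold lcm-ideal of the Cons/k-out-of-n:F failure ideal. -/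
/-- `suppK k σ = ⋃_{a ∈ σ} {a, a+1, …, a+k-1}`: the indices of the variables dividing
the lcm of the consecutive generators `x_a ⋯ x_{a+k-1}`, `a ∈ σ`. -/
def suppK (k : ℕ) (σ : Finset ℕ) : Finset ℕ :=
  σ.biUnion fun a => Finset.Ico a (a + k)

/-- `a < b` are consecutive elements of `σ`: both lie in `σ` and no element of `σ`
lies strictly between them. -/
def ConsecutiveIn (σ : Finset ℕ) (a b : ℕ) : Prop :=
  a ∈ σ ∧ b ∈ σ ∧ a < b ∧ ∀ c ∈ σ, ¬(a < c ∧ c < b)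

/-- `σ` is gap-admissible for `k`: every gap of `σ` (the size `b - a - 1 ≥ 1` for
consecutive elements `a < b`) has size at least `k`. -/
def GapAdmissible (k : ℕ) (σ : Finset ℕ) : Prop :=
  ∀ a b : ℕ, ConsecutiveIn σ a b → b = a + 1 ∨ k ≤ b - a - 1

lemma mem_of_Ico_subset_suppK (k : ℕ) (hk : 1 ≤ k) (σ : Finset ℕ)
    (hadm : GapAdmissible k σ) (t : ℕ) (h : Finset.Ico t (t + k) ⊆ suppK k σ) :
    t ∈ σ := by
  have ht : t ∈ suppK k σ := h (by simp [Finset.mem_Ico]; omega)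
  simp only [suppK, Finset.mem_biUnion, Finset.mem_Ico] at ht
  obtain ⟨a, ha, hat, hta⟩ := ht
  set S := σ.filter (fun s => s ≤ t) with hS
  have hSne : S.Nonempty := ⟨a, by simp [hS, ha]; omega⟩
  set astar := S.max' hSne with hastar
  have hamem : astar ∈ S := S.max'_mem hSne
  have haσ : astar ∈ σ := (Finset.mem_filter.mp hamem).1
  have hale : astar ≤ t := (Finset.mem_filter.mp hamem).2
  have haa : a ≤ astar := S.le_max' a (by simp [hS, ha]; omega)
  by_contra htσ
  have halt : astar < t := lt_of_le_of_ne hale (fun hEq => htσ (hEq ▸ haσ))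
  have hp : astar + k ∈ suppK k σ := h (by simp [Finset.mem_Ico]; omega)
  simp only [suppK, Finset.mem_biUnion, Finset.mem_Ico] at hp
  obtain ⟨b, hb, hbp, hpb⟩ := hp
  have hbgt : astar < b := by omega
  set T := σ.filter (fun s => astar < s ∧ s ≤ astar + k) with hT
  have hTne : T.Nonempty := ⟨b, by simp [hT, hb]; omega⟩
  set bstar := T.min' hTne with hbstar
  have hbmem : bstar ∈ T := T.min'_mem hTne
  have hbσ : bstar ∈ σ := (Finset.mem_filter.mp hbmem).1
  have hbprop := (Finset.mem_filter.mp hbmem).2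
  have hbt : t < bstar := by
    by_contra hle
    have : bstar ∈ S := Finset.mem_filter.mpr ⟨hbσ, by omega⟩
    have := S.le_max' bstar this
    omega
  have hcons : ConsecutiveIn σ astar bstar := by
    refine ⟨haσ, hbσ, hbprop.1, fun c hc ⟨h1, h2⟩ => ?_⟩
    have : c ∈ T := Finset.mem_filter.mpr ⟨hc, h1, by omega⟩
    have := T.min'_le c this
    omega
  rcases hadm astar bstar hcons with heq | hge <;> omega

/-- If `σ ⊆ {1,…,n-k+1}` with `|σ| = i` is gap-admissible for `k`, then for every
`τ ⊆ {1,…,n-k+1}` with `|τ| = i` and `τ ≠ σ`, `suppK k τ` is not contained in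
`suppK k σ`; hence the monomial on `suppK k σ` is a minimal generator of the `i`-fold
lcm-ideal of the Cons/`k`-out-of-`n`:F failure ideal. -/
theorem gapAdmissible_suppK_minimal (k n i : ℕ) (hk : 1 ≤ k) (hn : k ≤ n) (hi : 1 ≤ i)
    (σ : Finset ℕ) (hσ : σ ⊆ Finset.Icc 1 (n - k + 1)) (hcard : σ.card = i)
    (hadm : GapAdmissible k σ) :
    ∀ τ : Finset ℕ, τ ⊆ Finset.Icc 1 (n - k + 1) → τ.card = i → τ ≠ σ →
      ¬ suppK k τ ⊆ suppK k σ := by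
  intro τ hτ hτcard hne hsub
  have hsubset : τ ⊆ σ := by
    intro t ht
    apply mem_of_Ico_subset_suppK k hk σ hadm t
    refine (Finset.subset_biUnion_of_mem _ ht).trans hsub
  exact hne (Finset.eq_of_subset_of_card_le hsubset (by omega))
end

section
/- Let k ≥ 2, n ≥ k, i ≥ 1 be integers and let σ ⊆ {1,…,n-k+1} with |σ| = i. If σ has a gap of size g with 1 ≤ g ≤ k - 1 (i.e. there are consecutive elements a < b of σ with 1 ≤ b - a - 1 ≤ k - 1), then there exists τ ⊆ {1,…,n-k+1} with |τ| = i and supp_k(τ) strictly contained in supp_k(σ). In particular the monomial corresponding to supp_k(σ) is not a minimal generator of the i-fold lcm-ideal of the Cons/k-out-of-n:F failure ideal. -/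
lemma mem_suppK {k : ℕ} {σ : Finset ℕ} {y : ℕ} :
    y ∈ suppK k σ ↔ ∃ c ∈ σ, c ≤ y ∧ y < c + k := by
  simp [suppK, Finset.mem_biUnion, Finset.mem_Ico]

/-- If `σ ⊆ {1,…,n-k+1}` with `|σ| = i` has a gap of size `g` with `1 ≤ g ≤ k - 1`
(where `k ≥ 2`), then there is a `τ ⊆ {1,…,n-k+1}` with `|τ| = i` whose support
`suppK k τ` is strictly contained in `suppK k σ`; hence the monomial on `suppK k σ`
is not a minimal generator of the `i`-fold lcm-ideal of the Cons/`k`-out-of-`n`:F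
failure ideal. -/
theorem small_gap_suppK_not_minimal (k n i : ℕ) (hk : 2 ≤ k) (hn : k ≤ n) (hi : 1 ≤ i)
    (σ : Finset ℕ) (hσ : σ ⊆ Finset.Icc 1 (n - k + 1)) (hcard : σ.card = i)
    (hgap : ∃ a b : ℕ, ConsecutiveIn σ a b ∧ 1 ≤ b - a - 1 ∧ b - a - 1 ≤ k - 1) :
    ∃ τ : Finset ℕ, τ ⊆ Finset.Icc 1 (n - k + 1) ∧ τ.card = i ∧
      suppK k τ ⊂ suppK k σ := by
  obtain ⟨a, b, ⟨haσ, hbσ, hab, hbetween⟩, hg1, hg2⟩ := hgap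
  set g := b - a - 1 with hgdef
  have ha1 : 1 ≤ a := (Finset.mem_Icc.mp (hσ haσ)).1
  have hb : b = a + g + 1 := by omega
  have hgk : g + 1 ≤ k := by omega
  -- the connected block of σ starting at b
  set S := σ.filter (fun x => b ≤ x ∧ Finset.Icc b x ⊆ suppK k σ) with hSdef
  have hbS : b ∈ S := by
    rw [hSdef, Finset.mem_filter]
    refine ⟨hbσ, le_refl b, fun y hy => ?_⟩
    rw [Finset.mem_Icc] at hy
    exact mem_suppK.mpr ⟨b, hbσ, by omega, by omega⟩
  have hSne : S.Nonempty := ⟨b, hbS⟩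
  set M := S.max' hSne with hMdef
  have hMS : M ∈ S := S.max'_mem hSne
  obtain ⟨hMσ, hbM, hMcov⟩ := Finset.mem_filter.mp hMS
  -- any element of σ in [b, M + k) belongs to S
  have hmemS : ∀ x ∈ σ, b ≤ x → x < M + k → x ∈ S := by
    intro x hx hbx hxMk
    rw [hSdef, Finset.mem_filter]
    refine ⟨hx, hbx, fun y hy => ?_⟩
    rw [Finset.mem_Icc] at hy
    by_cases hyM : y ≤ M
    · exact hMcov (Finset.mem_Icc.mpr ⟨hy.1, hyM⟩)
    · exact mem_suppK.mpr ⟨M, hMσ, by omega, by omega⟩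
  -- elements of σ outside S are ≤ a or ≥ M + k
  have houtS : ∀ x ∈ σ, x ∉ S → x ≤ a ∨ M + k ≤ x := by
    intro x hx hxS
    by_cases hbx : b ≤ x
    · right
      by_contra h
      exact hxS (hmemS x hx hbx (by omega))
    · left
      by_contra h
      exact hbetween x hx ⟨by omega, by omega⟩
  -- elements of S are ≥ b and ≤ M
  have hSrange : ∀ x ∈ S, b ≤ x ∧ x ≤ M := by
    intro x hx
    exact ⟨(Finset.mem_filter.mp hx).2.1, S.le_max' x hx⟩
  refine ⟨(σ \ S) ∪ S.image (· - g), ?_, ?_, ?_⟩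
  · -- range
    intro c hc
    rcases Finset.mem_union.mp hc with h | h
    · exact hσ (Finset.mem_sdiff.mp h).1
    · obtain ⟨x, hxS, rfl⟩ := Finset.mem_image.mp h
      have hxσ : x ∈ σ := Finset.mem_of_mem_filter x hxS
      have := Finset.mem_Icc.mp (hσ hxσ)
      have hbx := (hSrange x hxS).1
      exact Finset.mem_Icc.mpr ⟨by omega, by omega⟩
  · -- cardinality
    have hdisj : Disjoint (σ \ S) (S.image (· - g)) := by
      rw [Finset.disjoint_left]
      intro z hz hz'
      obtain ⟨x, hxS, rfl⟩ := Finset.mem_image.mp hz'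
      obtain ⟨hbx, hxM⟩ := hSrange x hxS
      obtain ⟨hzσ, hzS⟩ := Finset.mem_sdiff.mp hz
      rcases houtS _ hzσ hzS with h | h <;> omega
    rw [Finset.card_union_of_disjoint hdisj,
      Finset.card_image_of_injOn (fun x hx y hy hxy => by
        have h1 := (hSrange x hx).1
        have h2 := (hSrange y hy).1
        omega),
      Finset.card_sdiff_of_subset (Finset.filter_subset _ _), hSdef]
    have := Finset.card_filter_le σ (fun x => b ≤ x ∧ Finset.Icc b x ⊆ suppK k σ)
    omega
  · -- strict inclusion of supports
    have hsub : suppK k ((σ \ S) ∪ S.image (· - g)) ⊆ suppK k σ := by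
      intro y hy
      obtain ⟨c, hc, hcy, hyc⟩ := mem_suppK.mp hy
      rcases Finset.mem_union.mp hc with h | h
      · exact mem_suppK.mpr ⟨c, (Finset.mem_sdiff.mp h).1, hcy, hyc⟩
      · obtain ⟨x, hxS, rfl⟩ := Finset.mem_image.mp h
        have hxσ : x ∈ σ := Finset.mem_of_mem_filter x hxS
        have hbx := (hSrange x hxS).1
        have hxcov := (Finset.mem_filter.mp hxS).2.2
        by_cases h1 : x ≤ y
        · exact mem_suppK.mpr ⟨x, hxσ, h1, by omega⟩
        · by_cases h2 : b ≤ y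
          · exact hxcov (Finset.mem_Icc.mpr ⟨h2, by omega⟩)
          · exact mem_suppK.mpr ⟨a, haσ, by omega, by omega⟩
    rw [Finset.ssubset_iff_of_subset hsub]
    refine ⟨M + k - 1, mem_suppK.mpr ⟨M, hMσ, by omega, by omega⟩, fun hmem => ?_⟩
    obtain ⟨c, hc, hcy, hyc⟩ := mem_suppK.mp hmem
    rcases Finset.mem_union.mp hc with h | h
    · obtain ⟨hzσ, hzS⟩ := Finset.mem_sdiff.mp h
      rcases houtS _ hzσ hzS with h' | h' <;> omega
    · obtain ⟨x, hxS, rfl⟩ := Finset.mem_image.mp h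
      obtain ⟨hbx, hxM⟩ := hSrange x hxS
      omega
end

section
/- Let K be a field and let k ≥ 1, n ≥ k, i ≥ 1 be integers. In K[x_1,…,x_n], the ideal generated by the monomials ∏_{t ∈ supp_k(σ)} x_t, where σ ranges over all subsets of {1,…,n-k+1} with |σ| = i, equals the ideal generated by the monomials ∏_{t ∈ supp_k(σ)} x_t where σ ranges only over gap-admissible subsets of {1,…,n-k+1} with |σ| = i. -/
lemma key_gapAdmissible (k M : ℕ) : ∀ N : ℕ, ∀ σ : Finset ℕ,
    σ.sum id = N → σ ⊆ Finset.Icc 1 M →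
    ∃ τ : Finset ℕ, τ ⊆ Finset.Icc 1 M ∧ τ.card = σ.card ∧ GapAdmissible k τ ∧
      suppK k τ ⊆ suppK k σ := by
  intro N
  induction N using Nat.strong_induction_on with
  | _ N ih =>
    intro σ hs hsub
    by_cases hga : GapAdmissible k σ
    · exact ⟨σ, hsub, rfl, hga, le_refl _⟩
    · unfold GapAdmissible at hga
      push_neg at hga
      obtain ⟨a, b, ⟨ha, hb, hab, hbet⟩, hne, hlt⟩ := hga
      have hab1 : a + 1 < b := by omega
      have hnotmem : a + 1 ∉ σ := fun h => hbet _ h ⟨by omega, hab1⟩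
      have hnotmem' : a + 1 ∉ σ.erase b := fun h => hnotmem (Finset.mem_of_mem_erase h)
      set σ' := insert (a+1) (σ.erase b) with hσ'
      have hcard : σ'.card = σ.card := by
        rw [hσ', Finset.card_insert_of_notMem hnotmem', Finset.card_erase_of_mem hb]
        have : 1 ≤ σ.card := Finset.card_pos.mpr ⟨b, hb⟩
        omega
      have hsub' : σ' ⊆ Finset.Icc 1 M := by
        intro x hx
        rcases Finset.mem_insert.mp hx with rfl | hx
        · have h2 := hsub hb
          simp only [Finset.mem_Icc] at h2 ⊢
          omega
        · exact hsub (Finset.mem_of_mem_erase hx)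
      have hsum : σ'.sum id < N := by
        subst hs
        rw [hσ', Finset.sum_insert hnotmem', ← Finset.add_sum_erase σ id hb]
        simp only [id_eq]
        omega
      have hsupp : suppK k σ' ⊆ suppK k σ := by
        intro t ht
        simp only [suppK, Finset.mem_biUnion, Finset.mem_Ico] at ht ⊢
        obtain ⟨c, hc, htc⟩ := ht
        rcases Finset.mem_insert.mp hc with rfl | hc
        · by_cases h : t < a + k
          · exact ⟨a, ha, by omega, h⟩
          · exact ⟨b, hb, by omega, by omega⟩
        · exact ⟨c, Finset.mem_of_mem_erase hc, htc⟩
      obtain ⟨τ, h1, h2, h3, h4⟩ := ih _ hsum σ' rfl hsub'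
      exact ⟨τ, h1, h2.trans hcard, h3, h4.trans hsupp⟩

open MvPolynomial

/-- The `i`-fold lcm-ideal of the Cons/`k`-out-of-`n`:F failure ideal, generated by
the squarefree monomials on `suppK k σ` for all `σ ⊆ {1,…,n-k+1}` with `|σ| = i`, is
already generated by those monomials with `σ` gap-admissible for `k`. -/
theorem cons_lcm_ideal_gapAdmissible_generators {K : Type*} [Field K] (k n i : ℕ)
    (hk : 1 ≤ k) (hn : k ≤ n) (hi : 1 ≤ i) :
    Ideal.span {m : MvPolynomial ℕ K | ∃ σ : Finset ℕ,
        σ ⊆ Finset.Icc 1 (n - k + 1) ∧ σ.card = i ∧ m = ∏ t ∈ suppK k σ, X t} =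
    Ideal.span {m : MvPolynomial ℕ K | ∃ σ : Finset ℕ,
        σ ⊆ Finset.Icc 1 (n - k + 1) ∧ σ.card = i ∧ GapAdmissible k σ ∧
          m = ∏ t ∈ suppK k σ, X t} := by
  apply le_antisymm
  · rw [Ideal.span_le]
    rintro m ⟨σ, hsub, hcard, rfl⟩
    obtain ⟨τ, h1, h2, h3, h4⟩ := key_gapAdmissible k (n - k + 1) _ σ rfl hsub
    have hprod := Finset.prod_sdiff (f := fun t => (X t : MvPolynomial ℕ K)) h4
    rw [← hprod]
    exact Ideal.mul_mem_left _ _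
      (Ideal.subset_span ⟨τ, h1, h2.trans hcard, h3, rfl⟩)
  · apply Ideal.span_mono
    rintro m ⟨σ, h1, h2, _, h4⟩
    exact ⟨σ, h1, h2, h4⟩
end

section
/- Let k ≥ 1 and n, i be integers with 1 ≤ i ≤ n - k + 1. The number of gap-admissible subsets σ ⊆ {1,…,n-k+1} with |σ| = i (equivalently, the number of minimal generators of the i-fold lcm-ideal of the Cons/k-out-of-n:F failure ideal) equals N_{k,n,i} = (n-k-i+2) + Σ_{m=1}^{n-k-i+1} (n-k-i+2-m) · Σ_{a=1}^{i-1} C(i-1, i-1-a) · C(m-(k-1)a-1, a-1), where a binomial coefficient C(x,y) is taken to be 0 whenever x < 0 (in particular whenever m - (k-1)a - 1 < 0). -/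
open Finset

theorem Finset.card_piAntidiag_nat_eq_choose {ι : Type*} [DecidableEq ι] (s : Finset ι) (n : ℕ) :
    #(piAntidiag s n) = (#s + n - 1).choose n := by
  rw [← card_finsuppAntidiag_nat_eq_choose, finsuppAntidiag, card_map, card_attach]

section GapVectors

variable {ι : Type*} [DecidableEq ι] {k m : ℕ} {s T : Finset ι} {g : ι → ℕ}

def gapVectors (k : ℕ) (s : Finset ι) (m : ℕ) : Finset (ι → ℕ) :=
  {g ∈ piAntidiag s m | ∀ i ∈ s, g i = 0 ∨ k ≤ g i}

theorem gapVectors_zero (k : ℕ) (s : Finset ι) : gapVectors k s 0 = {0} := by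
  ext g
  simp +contextual [gapVectors]

theorem mem_gapVectors_support_eq_iff (hT : T ⊆ s) :
    g ∈ gapVectors k s m ∧ {i ∈ s | g i ≠ 0} = T ↔
      (∀ i, g i ≠ 0 ↔ i ∈ T) ∧ ∑ i ∈ T, g i = m ∧ ∀ i ∈ T, k ≤ g i := by
  simp only [gapVectors, mem_filter, mem_piAntidiag, Finset.ext_iff]
  constructor
  · rintro ⟨⟨⟨hsum, hsupp⟩, hadm⟩, hT'⟩
    have hgT : ∀ i, g i ≠ 0 ↔ i ∈ T := fun i => by
      rw [← hT']; exact ⟨fun h => ⟨hsupp i h, h⟩, fun h => h.2⟩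
    refine ⟨hgT, ?_, fun i hi => ?_⟩
    · rw [← hsum]
      exact sum_subset hT fun i _ hi => not_not.1 (mt (hgT i).1 hi)
    · exact (hadm i (hT hi)).resolve_left ((hgT i).2 hi)
  · rintro ⟨hgT, hsum, hge⟩
    refine ⟨⟨⟨?_, fun i hi => hT ((hgT i).1 hi)⟩, fun i _ => ?_⟩, fun i => ?_⟩
    · rw [← hsum]
      exact (sum_subset hT fun i _ hi => not_not.1 (mt (hgT i).1 hi)).symm
    · by_cases hi : i ∈ T
      · exact .inr (hge i hi)
      · exact .inl (not_not.1 (mt (hgT i).1 hi))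
    · rw [← hgT]
      exact ⟨fun h => h.2, fun h => ⟨hT ((hgT i).1 h), h⟩⟩

theorem card_gapVectors_support_eq (hk : 1 ≤ k) (hT : T ⊆ s) :
    #{g ∈ gapVectors k s m | {i ∈ s | g i ≠ 0} = T} =
      if k * #T ≤ m then (#T + (m - k * #T) - 1).choose (m - k * #T) else 0 := by
  have mem_fiber {g : ι → ℕ} : g ∈ {g ∈ gapVectors k s m | {i ∈ s | g i ≠ 0} = T} ↔
      (∀ i, g i ≠ 0 ↔ i ∈ T) ∧ ∑ i ∈ T, g i = m ∧ ∀ i ∈ T, k ≤ g i := by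
    rw [mem_filter, mem_gapVectors_support_eq_iff hT]
  split_ifs with hm
  · rw [← card_piAntidiag_nat_eq_choose]
    refine card_nbij' (fun g i => g i - k) (fun h i => if i ∈ T then h i + k else 0)
      (fun g hg => ?_) (fun h hh => ?_) (fun g hg => ?_) (fun h hh => ?_)
    · obtain ⟨hgT, hsum, hge⟩ := mem_fiber.1 hg
      refine mem_piAntidiag.2
        ⟨?_, fun i hi => (hgT i).1 fun h0 => hi (by simp only [h0, Nat.zero_sub])⟩
      rw [sum_tsub_distrib T hge, hsum, sum_const, smul_eq_mul, mul_comm]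
    · have hsum := (mem_piAntidiag.1 hh).1
      refine mem_fiber.2 ⟨fun i => ?_, ?_, fun i hi => by simp [hi]⟩
      · dsimp only
        split_ifs with hi
        · exact iff_of_true (by omega) hi
        · exact iff_of_false (not_not.2 rfl) hi
      · rw [sum_ite_of_true fun _ hi => hi, sum_add_distrib, hsum, sum_const, smul_eq_mul,
          Nat.mul_comm #T k, Nat.sub_add_cancel hm]
    · obtain ⟨hgT, -, hge⟩ := mem_fiber.1 hg
      funext i
      by_cases hi : i ∈ T
      · simp [hi, Nat.sub_add_cancel (hge i hi)]
      · simpa [hi, eq_comm] using (not_iff_not.2 (hgT i)).2 hi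
    · funext i
      by_cases hi : i ∈ T
      · simp [hi]
      · simpa [hi, eq_comm] using not_imp_comm.1 ((mem_piAntidiag.1 hh).2 i) hi
  · refine card_eq_zero.2 (eq_empty_of_forall_notMem fun g hg => hm ?_)
    obtain ⟨-, hsum, hge⟩ := mem_fiber.1 hg
    simpa [← hsum, mul_comm] using card_nsmul_le_sum T g k hge

theorem card_gapVectors (hk : 1 ≤ k) (hm : 1 ≤ m) (s : Finset ι) :
    #(gapVectors k s m) = ∑ a ∈ Icc 1 #s, (#s).choose (#s - a) *
      if (k - 1) * a + 1 ≤ m then (m - ((k - 1) * a + 1)).choose (a - 1) else 0 := by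
  -- both sides count the compositions of `m` into `a` parts that are each at least `k`
  have compositions (a : ℕ) (ha : 1 ≤ a) :
      (if k * a ≤ m then (a + (m - k * a) - 1).choose (m - k * a) else 0) =
        if (k - 1) * a + 1 ≤ m then (m - ((k - 1) * a + 1)).choose (a - 1) else 0 := by
    have hka : k * a = (k - 1) * a + a := by
      rw [← Nat.succ_mul, Nat.succ_eq_add_one, Nat.sub_add_cancel hk]
    rw [hka]
    clear hka
    generalize (k - 1) * a = b
    split_ifs with h₁ h₂ h₂
    · rw [Nat.choose_symm_of_eq_add (show a + (m - (b + a)) - 1 = m - (b + a) + (a - 1) by omega)]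
      congr 1
      omega
    · omega
    · exact (Nat.choose_eq_zero_of_lt (by omega : m - (b + 1) < a - 1)).symm
    · rfl
  have hmaps : ((gapVectors k s m : Finset (ι → ℕ)) : Set (ι → ℕ)).MapsTo
      (fun g => {i ∈ s | g i ≠ 0}) s.powerset := fun g _ => mem_powerset.2 (filter_subset _ s)
  rw [card_eq_sum_card_fiberwise hmaps,
    sum_congr rfl fun T hT => card_gapVectors_support_eq hk (mem_powerset.1 hT),
    sum_powerset_apply_card
      (f := fun a => if k * a ≤ m then (a + (m - k * a) - 1).choose (m - k * a) else 0),
    range_eq_Ico, sum_eq_sum_Ico_succ_bot (Nat.succ_pos _)]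
  have hzero : (m - 1).choose m = 0 := Nat.choose_eq_zero_of_lt (by omega)
  simp only [mul_zero, Nat.sub_zero, zero_le, if_true, Nat.zero_add, hzero, smul_zero,
    Nat.succ_eq_add_one, Ico_add_one_right_eq_Icc]
  refine sum_congr rfl fun a ha => ?_
  rw [mem_Icc] at ha
  rw [smul_eq_mul, Nat.choose_symm ha.2, compositions a ha.1]

end GapVectors

theorem consecutiveIn_image_iff {j : ℕ} {f : Fin (j + 1) → ℕ} (hf : StrictMono f) {a b : ℕ} :
    ConsecutiveIn (univ.image f) a b ↔ ∃ t : Fin j, f t.castSucc = a ∧ f t.succ = b := by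
  simp only [ConsecutiveIn, mem_image, mem_univ, true_and, forall_exists_index,
    forall_apply_eq_imp_iff]
  constructor
  · rintro ⟨⟨u, rfl⟩, ⟨v, rfl⟩, huv, hbetween⟩
    rw [hf.lt_iff_lt] at huv
    obtain ⟨t, rfl⟩ := Fin.exists_castSucc_eq.2 (Fin.ne_last_of_lt huv)
    refine ⟨t, rfl, congrArg f (le_antisymm (Fin.castSucc_lt_iff_succ_le.1 huv) ?_)⟩
    exact not_lt.1 fun h => hbetween t.succ ⟨hf Fin.castSucc_lt_succ, hf h⟩
  · rintro ⟨t, rfl, rfl⟩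
    refine ⟨⟨_, rfl⟩, ⟨_, rfl⟩, hf Fin.castSucc_lt_succ, fun c ⟨h₁, h₂⟩ => ?_⟩
    rw [hf.lt_iff_lt] at h₁ h₂
    exact (Fin.castSucc_lt_iff_succ_le.1 h₁).not_gt h₂

section FromGaps

variable {j : ℕ} {s : ℕ} {g : Fin j → ℕ}

def fromGaps (s : ℕ) (g : Fin j → ℕ) (t : Fin (j + 1)) : ℕ :=
  s + t + Fin.partialSum g t

@[simp] theorem fromGaps_zero : fromGaps s g 0 = s := by
  simp [fromGaps]

theorem fromGaps_succ (t : Fin j) :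
    fromGaps s g t.succ = fromGaps s g t.castSucc + g t + 1 := by
  simp only [fromGaps, Fin.partialSum_succ, Fin.val_succ, Fin.val_castSucc]
  ring

theorem fromGaps_last : fromGaps s g (Fin.last j) = s + j + ∑ t, g t := by
  simp [fromGaps, Fin.partialSum, List.take_of_length_le, List.sum_ofFn]

theorem strictMono_fromGaps : StrictMono (fromGaps s g) :=
  Fin.strictMono_iff_lt_succ.2 fun t => by rw [fromGaps_succ]; omega

theorem gapAdmissible_image_fromGaps_iff {k : ℕ} :
    GapAdmissible k (univ.image (fromGaps s g)) ↔ ∀ t, g t = 0 ∨ k ≤ g t := by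
  simp only [GapAdmissible, consecutiveIn_image_iff strictMono_fromGaps]
  constructor
  · intro h t
    have := h _ _ ⟨t, rfl, rfl⟩
    rw [fromGaps_succ] at this
    omega
  · rintro h _ _ ⟨t, rfl, rfl⟩
    rw [fromGaps_succ]
    have := h t
    omega

theorem image_fromGaps_subset_Icc_iff {N : ℕ} :
    univ.image (fromGaps s g) ⊆ Icc 1 N ↔ 1 ≤ s ∧ s + j + ∑ t, g t ≤ N := by
  simp only [subset_iff, mem_image, mem_univ, true_and, forall_exists_index,
    forall_apply_eq_imp_iff, mem_Icc]
  refine ⟨fun h => ⟨by simpa using (h 0).1, fromGaps_last ▸ (h (Fin.last j)).2⟩,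
    fun ⟨hs, hN⟩ t => ⟨?_, ?_⟩⟩
  · calc 1 ≤ fromGaps s g 0 := by rwa [fromGaps_zero]
      _ ≤ fromGaps s g t := strictMono_fromGaps.monotone (Fin.zero_le t)
  · calc fromGaps s g t ≤ fromGaps s g (Fin.last j) :=
          strictMono_fromGaps.monotone (Fin.le_last t)
      _ ≤ N := by rwa [fromGaps_last]

theorem image_fromGaps_injective {s' : ℕ} {g' : Fin j → ℕ}
    (h : univ.image (fromGaps s g) = univ.image (fromGaps s' g')) : s = s' ∧ g = g' := by
  have hrange : Set.range (fromGaps s g) = Set.range (fromGaps s' g') := by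
    simpa [Set.image_univ] using congrArg (fun σ : Finset ℕ => (σ : Set ℕ)) h
  have hf := (strictMono_fromGaps.range_inj strictMono_fromGaps).1 hrange
  refine ⟨by simpa using congrFun hf 0, funext fun t => ?_⟩
  have := congrFun hf t.succ
  rw [fromGaps_succ, fromGaps_succ, congrFun hf t.castSucc] at this
  omega

theorem exists_image_fromGaps_eq {σ : Finset ℕ} (h : #σ = j + 1) :
    ∃ (s : ℕ) (g : Fin j → ℕ), univ.image (fromGaps s g) = σ := by
  set f := σ.orderEmbOfFin h
  refine ⟨f 0, fun t => f t.succ - f t.castSucc - 1, ?_⟩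
  suffices fromGaps (f 0) (fun t => f t.succ - f t.castSucc - 1) = f by
    rw [this, image_orderEmbOfFin_univ]
  funext t
  induction t using Fin.induction with
  | zero => exact fromGaps_zero
  | succ t ih =>
    have := f.strictMono (Fin.castSucc_lt_succ (i := t))
    rw [fromGaps_succ, ih]
    omega

end FromGaps

def startGapPairs (k N j : ℕ) : Set (ℕ × (Fin j → ℕ)) :=
  {p | 1 ≤ p.1 ∧ p.1 + j + ∑ t, p.2 t ≤ N ∧ ∀ t, p.2 t = 0 ∨ k ≤ p.2 t}

theorem gapAdmissible_eq_image_startGapPairs (k N j : ℕ) :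
    {σ : Finset ℕ | σ ⊆ Icc 1 N ∧ #σ = j + 1 ∧ GapAdmissible k σ} =
      (fun p => univ.image (fromGaps p.1 p.2)) '' startGapPairs k N j := by
  ext σ
  simp only [startGapPairs, Set.mem_ofPred_eq, Set.mem_image, Prod.exists]
  constructor
  · rintro ⟨hsub, hcard, hadm⟩
    obtain ⟨s, g, rfl⟩ := exists_image_fromGaps_eq hcard
    rw [image_fromGaps_subset_Icc_iff] at hsub
    exact ⟨s, g, ⟨hsub.1, hsub.2, gapAdmissible_image_fromGaps_iff.1 hadm⟩, rfl⟩
  · rintro ⟨s, g, ⟨hs, hsN, hg⟩, rfl⟩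
    refine ⟨image_fromGaps_subset_Icc_iff.2 ⟨hs, hsN⟩, ?_, gapAdmissible_image_fromGaps_iff.2 hg⟩
    rw [card_image_of_injective _ strictMono_fromGaps.injective, card_univ, Fintype.card_fin]

theorem ncard_startGapPairs (k N j : ℕ) :
    (startGapPairs k N j).ncard =
      ∑ m ∈ range (N - j), (N - j - m) * #(gapVectors k (univ : Finset (Fin j)) m) := by
  set P := (range (N - j)).sigma fun m =>
    Icc 1 (N - j - m) ×ˢ gapVectors k (univ : Finset (Fin j)) m
  have mem_P {m s : ℕ} {g : Fin j → ℕ} :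
      ⟨m, s, g⟩ ∈ P ↔ (s, g) ∈ startGapPairs k N j ∧ ∑ t, g t = m := by
    simp only [P, startGapPairs, Set.mem_ofPred_eq, mem_sigma, mem_range, mem_product, mem_Icc,
      gapVectors, mem_filter, mem_piAntidiag, mem_univ, implies_true, and_true, forall_const]
    constructor
    · rintro ⟨hm, ⟨hs, hsN⟩, hsum, hg⟩
      replace hsum : ∑ t, g t = m := hsum
      exact ⟨⟨hs, by omega, hg⟩, hsum⟩
    · rintro ⟨⟨hs, hsN, hg⟩, rfl⟩
      exact ⟨by omega, ⟨hs, by omega⟩, rfl, hg⟩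
  have hP : startGapPairs k N j = ↑(P.image Sigma.snd) := by
    ext ⟨s, g⟩
    simp only [coe_image, Set.mem_image, mem_coe, Sigma.exists, Prod.exists, mem_P,
      Prod.mk.injEq]
    exact ⟨fun h => ⟨_, s, g, ⟨h, rfl⟩, rfl, rfl⟩, by rintro ⟨m, s, g, ⟨h, -⟩, rfl, rfl⟩; exact h⟩
  have hinj : Set.InjOn Sigma.snd (P : Set (Σ _ : ℕ, ℕ × (Fin j → ℕ))) := by
    rintro ⟨m, s, g⟩ hp ⟨m', s', g'⟩ hp' (h : (s, g) = (s', g'))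
    obtain ⟨rfl, rfl⟩ := Prod.mk.inj h
    rw [mem_coe, mem_P] at hp hp'
    rw [← hp.2, ← hp'.2]
  rw [hP, Set.ncard_coe_finset, card_image_of_injOn hinj, card_sigma]
  refine sum_congr rfl fun m _ => ?_
  rw [card_product, Nat.card_Icc, Nat.add_sub_cancel]

theorem count_gapAdmissible_general (k n i : ℕ) (hk : 1 ≤ k) (hi1 : 1 ≤ i) :
    {σ : Finset ℕ | σ ⊆ Finset.Icc 1 (n - k + 1) ∧ σ.card = i ∧
        GapAdmissible k σ}.ncard =
      (n - k + 2 - i) +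
        ∑ m ∈ Finset.Icc 1 (n - k + 1 - i), (n - k + 2 - i - m) *
          ∑ a ∈ Finset.Icc 1 (i - 1), (i - 1).choose (i - 1 - a) *
            (if (k - 1) * a + 1 ≤ m then (m - ((k - 1) * a + 1)).choose (a - 1) else 0) := by
  obtain ⟨j, rfl⟩ : ∃ j, i = j + 1 := ⟨i - 1, by omega⟩
  rw [gapAdmissible_eq_image_startGapPairs,
    Set.ncard_image_of_injective _ fun p q h => Prod.ext_iff.2 (image_fromGaps_injective h),
    ncard_startGapPairs, Nat.add_sub_cancel,
    show n - k + 2 - (j + 1) = n - k + 1 - j by omega,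
    show n - k + 1 - (j + 1) = n - k + 1 - j - 1 by omega]
  generalize n - k + 1 - j = M
  cases M with
  | zero => simp
  | succ M =>
    rw [range_eq_Ico, sum_eq_sum_Ico_succ_bot M.succ_pos, Nat.succ_eq_add_one, zero_add,
      Ico_add_one_right_eq_Icc, gapVectors_zero, card_singleton, mul_one, Nat.sub_zero,
      Nat.add_sub_cancel]
    refine congrArg _ (sum_congr rfl fun m hm => ?_)
    rw [card_gapVectors hk (mem_Icc.1 hm).1, card_univ, Fintype.card_fin]

/-- **Generator count for Cons/k-out-of-n:F.** For `k ≥ 1` and `1 ≤ i ≤ n - k + 1`, the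
number of gap-admissible subsets `σ ⊆ {1,…,n-k+1}` with `|σ| = i` (the number of minimal
generators of the `i`-fold lcm-ideal) equals
`N_{k,n,i} = (n-k-i+2) + Σ_{m=1}^{n-k-i+1} (n-k-i+2-m) Σ_{a=1}^{i-1} C(i-1,i-1-a) C(m-(k-1)a-1,a-1)`,
where `C(x,y) = 0` whenever `x < 0` (encoded by the `if`-guard `(k-1)a + 1 ≤ m`). -/
theorem count_gapAdmissible (k n i : ℕ) (hk : 1 ≤ k) (hi1 : 1 ≤ i)
    (hi2 : i ≤ n - k + 1) :
    {σ : Finset ℕ | σ ⊆ Finset.Icc 1 (n - k + 1) ∧ σ.card = i ∧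
        GapAdmissible k σ}.ncard =
      (n - k + 2 - i) +
        ∑ m ∈ Finset.Icc 1 (n - k + 1 - i), (n - k + 2 - i - m) *
          ∑ a ∈ Finset.Icc 1 (i - 1), (i - 1).choose (i - 1 - a) *
            (if (k - 1) * a + 1 ≤ m then (m - ((k - 1) * a + 1)).choose (a - 1) else 0) :=
  count_gapAdmissible_general k n i hk hi1
end

section
/- Let n, j be integers with 1 ≤ j ≤ n. For every real number x (equivalently, as an identity of polynomials with integer coefficients), Σ_{m=j}^{n} C(n,m) x^m (1-x)^{n-m} = Σ_{a=0}^{n-j} (-1)^a C(n, j+a) C(a+j-1, j-1) x^{a+j}. -/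
/-!
Expanding `(1 - x) ^ (n - m)` binomially and using `C(n, m) C(n - m, k - m) = C(n, k) C(k, m)`,
the coefficient of `x ^ k` on the left is `C(n, k) · Σ_{m=j}^{k} (-1)^(k-m) C(k, m)`. This tail of
an alternating row of Pascal's triangle equals `(-1)^(k-j) C(k-1, j-1)`, which is the right-hand
side with `k = j + a`.
-/

open Finset

theorem one_sub_pow_eq_sum {R : Type*} [CommRing R] (x : R) (N : ℕ) :
    (1 - x) ^ N = ∑ b ∈ range (N + 1), (-1) ^ b * (N.choose b : R) * x ^ b := by
  rw [sub_eq_neg_add, add_pow]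
  refine sum_congr rfl fun b _ => ?_
  rw [neg_pow, one_pow]
  ring

theorem sum_Icc_add_eq_sum_range {M : Type*} [AddCommMonoid M] (f : ℕ → M) (j N : ℕ) :
    ∑ m ∈ Icc j (j + N), f m = ∑ i ∈ range (N + 1), f (j + i) := by
  rw [← Ico_add_one_right_eq_Icc, sum_Ico_eq_sum_range, add_assoc, Nat.add_sub_cancel_left]

theorem alternating_sum_choose_tail {R : Type*} [Ring R] {j : ℕ} (hj : 1 ≤ j) (a : ℕ) :
    ∑ i ∈ range (a + 1), (-1 : R) ^ (a - i) * ((j + a).choose (j + i) : R) =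
      (-1) ^ a * ((a + j - 1).choose (j - 1) : R) := by
  obtain ⟨k, rfl⟩ := Nat.exists_eq_add_of_le' hj
  have hrow : ∑ i ∈ range (a + 1), (-1 : R) ^ i * ((a + k + 1).choose i : R) =
      (-1) ^ a * ((a + k).choose a : R) := by
    simpa using congrArg (Int.cast : ℤ → R)
      (Int.alternating_sum_range_choose_eq_choose (n := a + k) (m := a))
  rw [← sum_range_reflect, Nat.add_sub_cancel, Nat.add_sub_cancel, ← add_assoc, Nat.add_sub_cancel,
    ← Nat.choose_symm_add, ← hrow]
  refine sum_congr rfl fun i hi => ?_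
  have hia : i ≤ a := Nat.lt_succ_iff.mp (mem_range.mp hi)
  rw [Nat.sub_sub_self hia, Nat.choose_symm_of_eq_add (by omega : k + 1 + a = k + 1 + (a - i) + i),
    add_right_comm k 1 a, add_comm k a]

theorem sum_choose_mul_pow_mul_one_sub_pow {R : Type*} [CommRing R] (x : R) (j N : ℕ) :
    ∑ i ∈ range (N + 1), ((j + N).choose (j + i) : R) * x ^ (j + i) * (1 - x) ^ (N - i) =
      ∑ a ∈ range (N + 1),
        (∑ i ∈ range (a + 1), (-1 : R) ^ (a - i) * ((j + a).choose (j + i) : R)) *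
          ((j + N).choose (j + a) : R) * x ^ (j + a) := by
  calc _ = ∑ i ∈ range (N + 1), ∑ b ∈ range (N + 1 - i),
        (-1 : R) ^ b * (((j + N).choose (j + i) * (N - i).choose b : ℕ) : R) *
          x ^ (j + i + b) := by
        refine sum_congr rfl fun i hi => ?_
        rw [one_sub_pow_eq_sum, mul_sum, Nat.sub_add_comm (Nat.lt_succ_iff.mp (mem_range.mp hi))]
        refine sum_congr rfl fun b _ => ?_
        push_cast
        ring
    _ = ∑ a ∈ range (N + 1), ∑ i ∈ range (a + 1),
        (-1 : R) ^ (a - i) * (((j + N).choose (j + i) * (N - i).choose (a - i) : ℕ) : R) *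
          x ^ (j + i + (a - i)) :=
      (sum_range_diag_flip _ fun i b => (-1 : R) ^ b *
        (((j + N).choose (j + i) * (N - i).choose b : ℕ) : R) * x ^ (j + i + b)).symm
    _ = _ := by
      refine sum_congr rfl fun a _ => ?_
      rw [sum_mul, sum_mul]
      refine sum_congr rfl fun i hi => ?_
      have hia : i ≤ a := Nat.lt_succ_iff.mp (mem_range.mp hi)
      have hchoose := Nat.choose_mul (n := j + N) (Nat.add_le_add_left hia j)
      rw [Nat.add_sub_add_left, Nat.add_sub_add_left] at hchoose
      rw [← hchoose, add_assoc, Nat.add_sub_cancel' hia]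
      push_cast
      ring

/-- For `1 ≤ j ≤ n` and every real `x`, the unreliability of the i.i.d.
`j`-out-of-`n`:F system equals the alternating Betti-number formula:
`Σ_{m=j}^{n} C(n,m) x^m (1-x)^{n-m} = Σ_{a=0}^{n-j} (-1)^a C(n,j+a) C(a+j-1,j-1) x^{a+j}`. -/
theorem unreliability_eq_betti_formula (n j : ℕ) (hj : 1 ≤ j) (hjn : j ≤ n) (x : ℝ) :
    ∑ m ∈ Finset.Icc j n, (n.choose m : ℝ) * x ^ m * (1 - x) ^ (n - m) =
      ∑ a ∈ Finset.range (n - j + 1),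
        (-1 : ℝ) ^ a * (n.choose (j + a) : ℝ) * ((a + j - 1).choose (j - 1) : ℝ) *
          x ^ (a + j) := by
  obtain ⟨N, rfl⟩ := Nat.exists_eq_add_of_le hjn
  rw [sum_Icc_add_eq_sum_range, Nat.add_sub_cancel_left]
  simp_rw [Nat.add_sub_add_left]
  rw [sum_choose_mul_pow_mul_one_sub_pow]
  refine sum_congr rfl fun a _ => ?_
  rw [alternating_sum_choose_tail hj, add_comm a j]
  ring
end

section
/- Let n, j be integers with 1 ≤ j ≤ n, let x be a real number with 0 ≤ x ≤ 1, and let t be an integer with 0 ≤ t ≤ n - j. If t is even, then Σ_{a=0}^{t} (-1)^a C(n, j+a) C(a+j-1, j-1) x^{a+j} ≥ Σ_{m=j}^{n} C(n,m) x^m (1-x)^{n-m}; if t is odd, then Σ_{a=0}^{t} (-1)^a C(n, j+a) C(a+j-1, j-1) x^{a+j} ≤ Σ_{m=j}^{n} C(n,m) x^m (1-x)^{n-m}. -/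
/-!
The truncated sum `S_t` and the unreliability `F` both vanish at `x = 0`, and their derivatives
are `n C(n-1,j-1) x^(j-1)` times, respectively, the first `t + 1` terms of the binomial expansion
of `(1 - x)^(n-j)` and `(1 - x)^(n-j)` itself. On `[0, 1]` the truncations `T_{N,t}` of the
expansion of `(1 - x)^N` alternate around it: by Pascal's rule, the signed errors
`r(N, t) = (-1)^t (T_{N,t}(x) - (1 - x)^N)` satisfy `r(N+1, t+1) = r(N, t+1) + x r(N, t)`.
Hence `(-1)^t (S_t - F)` is monotone on `[0, 1]`, so nonnegative there.
-/

open Finset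

noncomputable def truncatedOneSubPow (N t : ℕ) (x : ℝ) : ℝ :=
  ∑ a ∈ range (t + 1), (-1 : ℝ) ^ a * (N.choose a : ℝ) * x ^ a

noncomputable def truncatedBettiSum (n j t : ℕ) (x : ℝ) : ℝ :=
  ∑ a ∈ range (t + 1),
    (-1 : ℝ) ^ a * (n.choose (j + a) : ℝ) * ((a + j - 1).choose (j - 1) : ℝ) * x ^ (a + j)

noncomputable def unreliability (n j : ℕ) (x : ℝ) : ℝ :=
  ∑ m ∈ Icc j n, (n.choose m : ℝ) * x ^ m * (1 - x) ^ (n - m)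

theorem truncatedOneSubPow_zero_left (t : ℕ) (x : ℝ) : truncatedOneSubPow 0 t x = 1 := by
  simp [truncatedOneSubPow, sum_range_succ']

theorem truncatedOneSubPow_succ_succ (N t : ℕ) (x : ℝ) :
    truncatedOneSubPow (N + 1) (t + 1) x =
      truncatedOneSubPow N (t + 1) x - x * truncatedOneSubPow N t x := by
  simp only [truncatedOneSubPow]
  rw [sum_range_succ' _ (t + 1), sum_range_succ' _ (t + 1), mul_sum, add_sub_right_comm,
    ← sum_sub_distrib]
  simp only [Nat.choose_succ_succ, Nat.choose_zero_right]
  push_cast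
  congr 1
  refine sum_congr rfl fun a _ ↦ ?_
  ring

theorem neg_one_pow_mul_truncatedOneSubPow_sub_nonneg (N t : ℕ) {x : ℝ} (hx0 : 0 ≤ x)
    (hx1 : x ≤ 1) : 0 ≤ (-1) ^ t * (truncatedOneSubPow N t x - (1 - x) ^ N) := by
  induction N generalizing t with
  | zero => simp [truncatedOneSubPow_zero_left]
  | succ N ih =>
    cases t with
    | zero =>
      have : (1 - x) ^ (N + 1) ≤ 1 := pow_le_one₀ (by linarith) (by linarith)
      simpa [truncatedOneSubPow] using this
    | succ t =>
      have hrec : (-1) ^ (t + 1) * (truncatedOneSubPow (N + 1) (t + 1) x - (1 - x) ^ (N + 1)) =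
          (-1) ^ (t + 1) * (truncatedOneSubPow N (t + 1) x - (1 - x) ^ N) +
            x * ((-1) ^ t * (truncatedOneSubPow N t x - (1 - x) ^ N)) := by
        rw [truncatedOneSubPow_succ_succ]; ring
      rw [hrec]
      exact add_nonneg (ih (t + 1)) (mul_nonneg hx0 (ih t))

theorem Nat.succ_mul_choose_succ (n k : ℕ) :
    (k + 1) * n.choose (k + 1) = n * (n - 1).choose k := by
  cases n with
  | zero => simp
  | succ n => rw [Nat.add_sub_cancel, Nat.add_one_mul_choose_eq, mul_comm]

theorem Nat.add_mul_choose_add_mul_choose {j : ℕ} (hj : 1 ≤ j) (n a : ℕ) :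
    (a + j) * n.choose (j + a) * (a + j - 1).choose (j - 1) =
      n * (n - 1).choose (j - 1) * (n - j).choose a := by
  obtain ⟨k, rfl⟩ := Nat.exists_eq_add_of_le' hj
  have hmul := Nat.choose_mul (n := n) (k := a + k + 1) (s := k + 1) (by omega)
  rw [show a + k + 1 - (k + 1) = a by omega] at hmul
  rw [show a + (k + 1) - 1 = a + k by omega, Nat.add_sub_cancel,
    show a + (k + 1) = a + k + 1 by ring, show k + 1 + a = a + k + 1 by ring]
  calc (a + k + 1) * n.choose (a + k + 1) * (a + k).choose k
      = n.choose (a + k + 1) * ((a + k + 1) * (a + k).choose k) := by ring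
    _ = (k + 1) * (n.choose (a + k + 1) * (a + k + 1).choose (k + 1)) := by
      rw [Nat.add_one_mul_choose_eq]; ring
    _ = (k + 1) * n.choose (k + 1) * (n - (k + 1)).choose a := by rw [hmul]; ring
    _ = n * (n - 1).choose k * (n - (k + 1)).choose a := by rw [Nat.succ_mul_choose_succ]

theorem hasDerivAt_truncatedBettiSum {j : ℕ} (hj : 1 ≤ j) (n t : ℕ) (x : ℝ) :
    HasDerivAt (truncatedBettiSum n j t)
      (n * (n - 1).choose (j - 1) * x ^ (j - 1) * truncatedOneSubPow (n - j) t x) x := by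
  have hterm (a : ℕ) : HasDerivAt
      (fun y ↦ (-1 : ℝ) ^ a * n.choose (j + a) * (a + j - 1).choose (j - 1) * y ^ (a + j))
      ((-1) ^ a * n.choose (j + a) * (a + j - 1).choose (j - 1) * ((a + j : ℕ) * x ^ (a + j - 1)))
      x :=
    (hasDerivAt_pow (a + j) x).const_mul _
  refine (HasDerivAt.fun_sum (u := range (t + 1)) fun a _ ↦ hterm a).congr_deriv ?_
  rw [truncatedOneSubPow, mul_sum]
  refine sum_congr rfl fun a _ ↦ ?_
  have hcoeff : ((a + j : ℕ) : ℝ) * n.choose (j + a) * (a + j - 1).choose (j - 1) =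
      n * (n - 1).choose (j - 1) * (n - j).choose a := by
    exact_mod_cast Nat.add_mul_choose_add_mul_choose hj n a
  rw [show x ^ (a + j - 1) = x ^ (j - 1) * x ^ a by rw [← pow_add]; congr 1; omega]
  linear_combination ((-1 : ℝ) ^ a * x ^ (j - 1) * x ^ a) * hcoeff

theorem hasDerivAt_unreliability {n j : ℕ} (hj : 1 ≤ j) (hjn : j ≤ n) (x : ℝ) :
    HasDerivAt (unreliability n j)
      (n * (n - 1).choose (j - 1) * x ^ (j - 1) * (1 - x) ^ (n - j)) x := by
  set b : ℕ → Polynomial ℝ := fun m ↦ bernsteinPolynomial ℝ (n - 1) (m - 1)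
  have hderiv :
      Polynomial.derivative (∑ m ∈ Icc j n, bernsteinPolynomial ℝ n m) = n * b j := by
    have hterm : ∀ m ∈ Icc j n,
        Polynomial.derivative (bernsteinPolynomial ℝ n m) = -(n * (b (m + 1) - b m)) := by
      intro m hm
      obtain ⟨m, rfl⟩ := Nat.exists_eq_add_of_le' (hj.trans (mem_Icc.1 hm).1)
      rw [bernsteinPolynomial.derivative_succ]
      simp only [b, Nat.add_sub_cancel]
      ring
    have hlast : b (n + 1) = 0 := bernsteinPolynomial.eq_zero_of_lt ℝ (by simp; omega)
    rw [Polynomial.derivative_sum, sum_congr rfl hterm, sum_neg_distrib, ← mul_sum,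
      sum_Icc_sub hjn, hlast]
    ring
  have heval :
      (fun y ↦ (∑ m ∈ Icc j n, bernsteinPolynomial ℝ n m).eval y) = unreliability n j := by
    ext y
    simp [unreliability, bernsteinPolynomial, Polynomial.eval_finsetSum]
  rw [← heval]
  refine (Polynomial.hasDerivAt _ x).congr_deriv ?_
  rw [hderiv]
  simp [b, bernsteinPolynomial, show n - 1 - (j - 1) = n - j by omega, mul_assoc]

theorem truncatedBettiSum_at_zero {j : ℕ} (hj : 1 ≤ j) (n t : ℕ) :
    truncatedBettiSum n j t 0 = 0 :=
  sum_eq_zero fun a _ ↦ by simp [zero_pow (by omega : a + j ≠ 0)]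

theorem unreliability_at_zero {j : ℕ} (hj : 1 ≤ j) (n : ℕ) : unreliability n j 0 = 0 :=
  sum_eq_zero fun m hm ↦ by simp [zero_pow (by grind : m ≠ 0)]

theorem neg_one_pow_mul_truncatedBettiSum_sub_unreliability_nonneg {n j : ℕ} (hj : 1 ≤ j)
    (hjn : j ≤ n) (t : ℕ) {x : ℝ} (hx0 : 0 ≤ x) (hx1 : x ≤ 1) :
    0 ≤ (-1) ^ t * (truncatedBettiSum n j t x - unreliability n j x) := by
  set φ : ℝ → ℝ := fun y ↦ (-1) ^ t * (truncatedBettiSum n j t y - unreliability n j y)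
  have hφ' (y : ℝ) : HasDerivAt φ (n * (n - 1).choose (j - 1) * y ^ (j - 1) *
      ((-1) ^ t * (truncatedOneSubPow (n - j) t y - (1 - y) ^ (n - j)))) y :=
    (((hasDerivAt_truncatedBettiSum hj n t y).sub (hasDerivAt_unreliability hj hjn y)).const_mul
      _).congr_deriv (by ring)
  have hmono : MonotoneOn φ (Set.Icc 0 1) := by
    refine monotoneOn_of_hasDerivWithinAt_nonneg (convex_Icc 0 1)
      (fun y _ ↦ (hφ' y).continuousAt.continuousWithinAt) (fun y _ ↦ (hφ' y).hasDerivWithinAt)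
      fun y hy ↦ ?_
    rw [interior_Icc] at hy
    exact mul_nonneg (mul_nonneg (by positivity) (pow_nonneg hy.1.le _))
      (neg_one_pow_mul_truncatedOneSubPow_sub_nonneg _ t hy.1.le hy.2.le)
  have hφ0 : φ 0 = 0 := by simp [φ, truncatedBettiSum_at_zero hj, unreliability_at_zero hj]
  exact hφ0 ▸ hmono ⟨le_rfl, zero_le_one⟩ ⟨hx0, hx1⟩ hx0

theorem truncated_betti_formula_bounds_general (n j t : ℕ) (hj : 1 ≤ j) (hjn : j ≤ n)
    (x : ℝ) (hx0 : 0 ≤ x) (hx1 : x ≤ 1) :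
    (Even t →
      ∑ m ∈ Finset.Icc j n, (n.choose m : ℝ) * x ^ m * (1 - x) ^ (n - m) ≤
        ∑ a ∈ Finset.range (t + 1),
          (-1 : ℝ) ^ a * (n.choose (j + a) : ℝ) * ((a + j - 1).choose (j - 1) : ℝ) *
            x ^ (a + j)) ∧
    (Odd t →
      ∑ a ∈ Finset.range (t + 1),
          (-1 : ℝ) ^ a * (n.choose (j + a) : ℝ) * ((a + j - 1).choose (j - 1) : ℝ) *
            x ^ (a + j) ≤
        ∑ m ∈ Finset.Icc j n, (n.choose m : ℝ) * x ^ m * (1 - x) ^ (n - m)) := by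
  have h := neg_one_pow_mul_truncatedBettiSum_sub_unreliability_nonneg hj hjn t hx0 hx1
  refine ⟨fun heven ↦ ?_, fun hodd ↦ ?_⟩
  · rwa [heven.neg_one_pow, one_mul, sub_nonneg] at h
  · rwa [hodd.neg_one_pow, neg_one_mul, neg_nonneg, sub_nonpos] at h

/-- Bonferroni-type bounds: for `1 ≤ j ≤ n`, `0 ≤ x ≤ 1` and `0 ≤ t ≤ n - j`, the
truncation after `t+1` terms of the alternating formula
`f_{j,n}(x) = Σ_a (-1)^a C(n,j+a) C(a+j-1,j-1) x^{a+j}` is an upper bound for the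
unreliability `Σ_{m=j}^{n} C(n,m) x^m (1-x)^{n-m}` when `t` is even, and a lower bound
when `t` is odd. -/
theorem truncated_betti_formula_bounds (n j t : ℕ) (hj : 1 ≤ j) (hjn : j ≤ n)
    (ht : t ≤ n - j) (x : ℝ) (hx0 : 0 ≤ x) (hx1 : x ≤ 1) :
    (Even t →
      ∑ m ∈ Finset.Icc j n, (n.choose m : ℝ) * x ^ m * (1 - x) ^ (n - m) ≤
        ∑ a ∈ Finset.range (t + 1),
          (-1 : ℝ) ^ a * (n.choose (j + a) : ℝ) * ((a + j - 1).choose (j - 1) : ℝ) *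
            x ^ (a + j)) ∧
    (Odd t →
      ∑ a ∈ Finset.range (t + 1),
          (-1 : ℝ) ^ a * (n.choose (j + a) : ℝ) * ((a + j - 1).choose (j - 1) : ℝ) *
            x ^ (a + j) ≤
        ∑ m ∈ Finset.Icc j n, (n.choose m : ℝ) * x ^ m * (1 - x) ^ (n - m)) :=
  truncated_betti_formula_bounds_general n j t hj hjn x hx0 hx1
end

section
/- Let n, k, j, l be integers with 1 ≤ k < j ≤ n and C(j-1,k) < l ≤ C(j,k). The set of minimal elements, with respect to set inclusion, of the family {⋃_{A∈F} A : F a finite set of k-subsets of {1,…,n} with |F| = l} is exactly the set of all j-element subsets of {1,…,n}. -/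
private lemma aux_le_choose {n k l : ℕ} (F : Finset (Finset (Fin n)))
    (hF : F.card = l) (hFk : ∀ A ∈ F, A.card = k) :
    l ≤ (F.sup id).card.choose k := by
  have hsub : F ⊆ (F.sup id).powersetCard k := by
    intro A hA
    rw [Finset.mem_powersetCard]
    exact ⟨Finset.le_sup (f := id) hA, hFk A hA⟩
  calc l = F.card := hF.symm
    _ ≤ _ := Finset.card_le_card hsub
    _ = _ := Finset.card_powersetCard _ _

private lemma aux_card_lower {n k j l : ℕ} (hl1 : (j - 1).choose k < l)
    (F : Finset (Finset (Fin n))) (hF : F.card = l) (hFk : ∀ A ∈ F, A.card = k) :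
    j ≤ (F.sup id).card := by
  have h1 := aux_le_choose F hF hFk
  by_contra hlt
  push_neg at hlt
  have h2 : (F.sup id).card ≤ j - 1 := Nat.le_sub_one_of_lt hlt
  have := Nat.choose_le_choose k h2
  omega

private lemma aux_exists_family {n k j l : ℕ} (hl1 : (j - 1).choose k < l)
    (hl2 : l ≤ j.choose k) (W : Finset (Fin n)) (hW : W.card = j) :
    ∃ F : Finset (Finset (Fin n)), F.card = l ∧ (∀ A ∈ F, A.card = k) ∧
      W = F.sup id := by
  obtain ⟨F, hFsub, hFcard⟩ := Finset.exists_subset_card_eq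
    (s := W.powersetCard k) (n := l) (by rw [Finset.card_powersetCard, hW]; exact hl2)
  have hFk : ∀ A ∈ F, A.card = k := fun A hA =>
    (Finset.mem_powersetCard.mp (hFsub hA)).2
  refine ⟨F, hFcard, hFk, ?_⟩
  have hsub : F.sup id ⊆ W :=
    Finset.sup_le fun A hA => (Finset.mem_powersetCard.mp (hFsub hA)).1
  have hc := aux_card_lower hl1 F hFcard hFk
  exact (Finset.eq_of_subset_of_card_le hsub (by omega)).symm

/-- **Theorem 1 (combinatorial form).** For `1 ≤ k < j ≤ n` and `C(j-1,k) < l ≤ C(j,k)`,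
the minimal elements (w.r.t. inclusion) of the family of unions `⋃_{A ∈ F} A`, where `F`
ranges over finite sets of `l` pairwise distinct `k`-subsets of `{1,…,n}`, are exactly
the `j`-element subsets of `{1,…,n}`. -/
theorem minimal_l_multicuts_eq_j_subsets (n k j l : ℕ)
    (hk : 1 ≤ k) (hkj : k < j) (hjn : j ≤ n)
    (hl1 : (j - 1).choose k < l) (hl2 : l ≤ j.choose k) :
    {U : Finset (Fin n) |
        (∃ F : Finset (Finset (Fin n)), F.card = l ∧ (∀ A ∈ F, A.card = k) ∧
          U = F.sup id) ∧
        ∀ V : Finset (Fin n),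
          (∃ F : Finset (Finset (Fin n)), F.card = l ∧ (∀ A ∈ F, A.card = k) ∧
            V = F.sup id) → ¬ V ⊂ U} =
      {U : Finset (Fin n) | U.card = j} := by
  ext U
  simp only [Set.mem_setOf_eq]
  constructor
  · rintro ⟨⟨F, hFc, hFk, hU⟩, hmin⟩
    have hUj : j ≤ U.card := hU ▸ aux_card_lower hl1 F hFc hFk
    by_contra hne
    have hlt : j < U.card := lt_of_le_of_ne hUj (Ne.symm hne)
    obtain ⟨W, hWsub, hWcard⟩ := Finset.exists_subset_card_eq (s := U) (n := j) hUj
    have hWU : W ⊂ U := hWsub.ssubset_of_ne (by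
      intro h; rw [h] at hWcard; omega)
    exact hmin W (aux_exists_family hl1 hl2 W hWcard) hWU
  · intro hU
    refine ⟨aux_exists_family hl1 hl2 U hU, ?_⟩
    rintro V ⟨F, hFc, hFk, hV⟩ hVU
    have hVj : j ≤ V.card := hV ▸ aux_card_lower hl1 F hFc hFk
    have := Finset.card_lt_card hVU
    omega
end
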